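/- Let H be a real separable Hilbert space, Δt > 0, and let F : (0,∞) → H be strongly measurable. For k ≥ 1 define B_k := ∫₀^∞ F(Δt s) · e^{−s} s^{k−1}/(k−1)! ds. (i) If 1 ≤ p < ∞ and ∫₀^∞ ‖F(t)‖^p dt < ∞, then for every n ≥ 1: Δt Σ_{k=1}^n ‖B_k‖^p ≤ ∫₀^∞ ‖F(t)‖^p dt. (ii) If F is essentially bounded, then sup_{k≥1} ‖B_k‖ ≤ ess sup_{t>0} ‖F(t)‖. -/

import Mathlib

open MeasureTheory Filter Set
open scoped ENNReal NNReal RealInnerProductSpace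

noncomputable section

/-- The Laplace transform `b̂(z) = ∫₀^∞ e^{-zt} b(t) dt` of a real-valued kernel `b`. -/
def laplaceTransform (b : ℝ → ℝ) (z : ℂ) : ℂ :=
  ∫ t in Set.Ioi (0 : ℝ), Complex.exp (-z * t) * (b t : ℂ)

/-- Assumption 1: `b` is a nonzero, locally integrable, 3-monotone kernel
(with derivative `b'` on `(0,∞)`), `b(t) → 0` as `t → ∞`, and the angle condition
`ρ = 1 + (2/π) sup{|arg b̂(λ)| : Re λ > 0} ∈ (1,2)` holds. -/
structure Assumption1 (b b' : ℝ → ℝ) (ρ : ℝ) : Prop where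
  locInt : ∀ T > 0, IntegrableOn b (Set.Ioc 0 T)
  ne_zero : ∃ t > 0, b t ≠ 0
  nonneg : ∀ t > 0, 0 ≤ b t
  anti : AntitoneOn b (Set.Ioi 0)
  cvx : ConvexOn ℝ (Set.Ioi 0) b
  hasDeriv : ∀ t > 0, HasDerivAt b (b' t) t
  deriv_nonpos : ∀ t > 0, b' t ≤ 0
  deriv_anti : AntitoneOn (fun t => -(b' t)) (Set.Ioi 0)
  deriv_cvx : ConvexOn ℝ (Set.Ioi 0) (fun t => -(b' t))
  tendsto_zero : Tendsto b atTop (nhds 0)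
  rho_eq : ρ = 1 + (2 / Real.pi) *
      sSup {θ : ℝ | ∃ z : ℂ, 0 < z.re ∧ θ = |(laplaceTransform b z).arg|}
  rho_mem : ρ ∈ Set.Ioo (1 : ℝ) 2

/-- Assumption 2: `b̂` extends analytically to a sector `Σ_θ`, `θ > π/2`, with the
bounds `|b̂^{(k)}(z)| ≤ C |z|^{1-ρ-k}`, `k = 0,1`, there. -/
structure Assumption2 (b : ℝ → ℝ) (ρ θ : ℝ) : Prop where
  theta_gt : Real.pi / 2 < θ
  holo : ∃ B : ℂ → ℂ,
    (∀ z : ℂ, z ≠ 0 → |z.arg| < θ → DifferentiableAt ℂ B z) ∧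
    (∀ z : ℂ, 0 < z.re → B z = laplaceTransform b z) ∧
    ∃ C > 0, (∀ z : ℂ, z ≠ 0 → |z.arg| < θ → ‖B z‖ ≤ C * ‖z‖ ^ (1 - ρ)) ∧
      (∀ z : ℂ, z ≠ 0 → |z.arg| < θ → ‖deriv B z‖ ≤ C * ‖z‖ ^ (-ρ))

/-- `s` (with derivative `s'` on `(0,∞)`) solves the scalar Volterra equation
`s'(t) + λ ∫₀ᵗ b(t-u) s(u) du = 0`, `s(0) = 1`. -/
structure IsScalarSolution (b : ℝ → ℝ) (lam : ℝ) (s s' : ℝ → ℝ) : Prop where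
  init : s 0 = 1
  cont : ContinuousOn s (Set.Ici 0)
  hasDeriv : ∀ t > 0, HasDerivAt s (s' t) t
  eqn : ∀ t > 0, s' t + lam * ∫ u in (0 : ℝ)..t, b (t - u) * s u = 0

/-- The resolvent family `S(t)x = Σ_k s_k(t) (x,e_k) e_k`. -/
def Sop {H : Type*} [NormedAddCommGroup H] [InnerProductSpace ℝ H]
    (e : HilbertBasis ℕ ℝ H) (s : ℕ → ℝ → ℝ) (t : ℝ) (x : H) : H :=
  ∑' k, (s k t * ⟪x, e k⟫) • (e k : H)

/-- The Backward Euler convolution quadrature operator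
`B_k = ∫₀^∞ F(Δt s) e^{-s} s^{k-1}/(k-1)! ds`. -/
def quadB {H : Type*} [NormedAddCommGroup H] [NormedSpace ℝ H]
    (Δt : ℝ) (F : ℝ → H) (k : ℕ) : H :=
  ∫ u in Set.Ioi (0 : ℝ),
    (Real.exp (-u) * u ^ (k - 1) / (Nat.factorial (k - 1) : ℝ)) • F (Δt * u)

/-- The finite element setup: `f` is an orthonormal basis of the finite dimensional
subspace `V_h ⊆ D(A^{1/2})`, consisting of eigenvectors of the discrete operator `A_h`
(defined via the bilinear form `a(u,v) = Σ_k λ_k (u,e_k)(v,e_k)`) with positive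
eigenvalues `μ`. -/
structure FESetup {H : Type*} [NormedAddCommGroup H] [InnerProductSpace ℝ H]
    (e : HilbertBasis ℕ ℝ H) (lam : ℕ → ℝ) (N : ℕ) (f : Fin N → H) (μ : Fin N → ℝ) :
    Prop where
  f_orth : Orthonormal ℝ f
  mu_pos : ∀ j, 0 < μ j
  f_dom : ∀ j, (∑' k, ENNReal.ofReal (lam k * ⟪f j, e k⟫ ^ 2)) < ⊤
  eigen : ∀ j j', (∑' k, lam k * ⟪f j, e k⟫ * ⟪f j', e k⟫) = μ j * ⟪f j, f j'⟫

/-!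
`B_k` is the mean of `F (Δt X)` for an Erlang random variable `X` of shape `k`, whose density
is `f_k`. Jensen's inequality for this probability measure bounds `‖B_k‖^p` by the `f_k`-weighted
integral of `‖F (Δt ·)‖^p`; summing over `k` and using `∑ f_k ≤ 1` leaves `∫₀^∞ ‖F (Δt s)‖^p ds`,
which the substitution `t = Δt s` turns into `Δt⁻¹ ∫₀^∞ ‖F t‖^p dt`. The `ℓ^∞` bound is the
triangle inequality for the same probability measures.
-/

-- `erlangDensity m` is the density `f_{m+1}` of the paper.
def erlangDensity (m : ℕ) (u : ℝ) : ℝ := Real.exp (-u) * u ^ m / (m.factorial : ℝ)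

lemma erlangDensity_nonneg (m : ℕ) {u : ℝ} (hu : 0 ≤ u) : 0 ≤ erlangDensity m u := by
  unfold erlangDensity; positivity

lemma measurable_erlangDensity (m : ℕ) : Measurable (erlangDensity m) := by
  unfold erlangDensity; fun_prop

lemma lintegral_erlangDensity (m : ℕ) :
    ∫⁻ u in Ioi 0, ENNReal.ofReal (erlangDensity m u) = 1 := by
  have hΓ : ∫ u in Ioi (0 : ℝ), Real.exp (-u) * u ^ m = m.factorial := by
    simpa [Real.Gamma_nat_eq_factorial] using
      (Real.Gamma_eq_integral (s := m + 1) (by positivity)).symm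
  have hint : IntegrableOn (erlangDensity m) (Ioi 0) := by
    have h := Real.GammaIntegral_convergent (s := m + 1) (by positivity)
    simp only [add_sub_cancel_right, Real.rpow_natCast] at h
    exact h.div_const _
  have hone : ∫ u in Ioi 0, erlangDensity m u = 1 := by
    simp only [erlangDensity]
    rw [integral_div, hΓ, div_self (by positivity)]
  have hnonneg : 0 ≤ᵐ[volume.restrict (Ioi 0)] erlangDensity m :=
    (ae_restrict_iff' measurableSet_Ioi).2 (.of_forall fun u hu => erlangDensity_nonneg m hu.le)
  rw [← ofReal_integral_eq_lintegral_ofReal hint hnonneg, hone, ENNReal.ofReal_one]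

lemma sum_erlangDensity_le_one (n : ℕ) {u : ℝ} (hu : 0 ≤ u) :
    ∑ k ∈ Finset.Icc 1 n, erlangDensity (k - 1) u ≤ 1 := by
  calc ∑ k ∈ Finset.Icc 1 n, erlangDensity (k - 1) u
      = Real.exp (-u) * ∑ m ∈ Finset.range n, u ^ m / m.factorial := by
        rw [← Finset.Ico_add_one_right_eq_Icc, Finset.sum_Ico_eq_sum_range, Finset.mul_sum]
        simp [erlangDensity, mul_div_assoc]
    _ ≤ Real.exp (-u) * Real.exp u := by gcongr; exact Real.sum_le_exp_of_nonneg hu n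
    _ = 1 := by rw [← Real.exp_add, neg_add_cancel, Real.exp_zero]

def erlangMeasure (m : ℕ) : Measure ℝ :=
  (volume.restrict (Ioi 0)).withDensity fun u => ENNReal.ofReal (erlangDensity m u)

instance (m : ℕ) : IsProbabilityMeasure (erlangMeasure m) :=
  ⟨by rw [erlangMeasure, withDensity_apply _ MeasurableSet.univ, Measure.restrict_univ,
    lintegral_erlangDensity]⟩

lemma erlangMeasure_absolutelyContinuous (m : ℕ) :
    erlangMeasure m ≪ volume.restrict (Ioi 0) :=
  withDensity_absolutelyContinuous _ _

lemma lintegral_erlangMeasure (m : ℕ) (g : ℝ → ℝ≥0∞) :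
    ∫⁻ u, g u ∂erlangMeasure m = ∫⁻ u in Ioi 0, ENNReal.ofReal (erlangDensity m u) * g u :=
  lintegral_withDensity_eq_lintegral_mul_non_measurable _
    (measurable_erlangDensity m).ennreal_ofReal (.of_forall fun _ => ENNReal.ofReal_lt_top) g

lemma quadB_eq_integral_erlangMeasure {E : Type*} [NormedAddCommGroup E] [NormedSpace ℝ E]
    (Δt : ℝ) (F : ℝ → E) (k : ℕ) :
    quadB Δt F k = ∫ u, F (Δt * u) ∂erlangMeasure (k - 1) := by
  rw [erlangMeasure, integral_withDensity_eq_integral_toReal_smul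
    (measurable_erlangDensity _).ennreal_ofReal (.of_forall fun _ => ENNReal.ofReal_lt_top)]
  refine setIntegral_congr_fun measurableSet_Ioi fun u hu => ?_
  rw [ENNReal.toReal_ofReal (erlangDensity_nonneg _ hu.le), erlangDensity]

lemma map_const_mul_volume_restrict_Ioi {c : ℝ} (hc : 0 < c) :
    Measure.map (c * ·) (volume.restrict (Ioi 0)) =
      ENNReal.ofReal c⁻¹ • volume.restrict (Ioi 0) := by
  have hpre : (c * ·) ⁻¹' Ioi 0 = Ioi 0 := by
    ext u; simp [mul_pos_iff_of_pos_left hc]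
  rw [← hpre, ← Measure.restrict_map (measurable_const_mul c) measurableSet_Ioi,
    Real.map_volume_mul_left hc.ne', Measure.restrict_smul, abs_of_pos (inv_pos.2 hc), hpre]

lemma quasiMeasurePreserving_const_mul_restrict_Ioi {c : ℝ} (hc : 0 < c) :
    Measure.QuasiMeasurePreserving (c * ·) (volume.restrict (Ioi 0)) (volume.restrict (Ioi 0)) :=
  ⟨measurable_const_mul c, by
    rw [map_const_mul_volume_restrict_Ioi hc]; exact Measure.smul_absolutelyContinuous⟩

lemma lintegral_comp_const_mul_Ioi (f : ℝ → ℝ≥0∞) {c : ℝ} (hc : 0 < c) :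
    ENNReal.ofReal c * ∫⁻ u in Ioi 0, f (c * u) = ∫⁻ t in Ioi 0, f t := by
  rw [← (measurableEmbedding_mulLeft₀ hc.ne').lintegral_map,
    map_const_mul_volume_restrict_Ioi hc, lintegral_smul_measure, smul_eq_mul, ← mul_assoc,
    ← ENNReal.ofReal_mul hc.le, mul_inv_cancel₀ hc.ne', ENNReal.ofReal_one, one_mul]

lemma rpow_lintegral_le_lintegral_rpow {α : Type*} [MeasurableSpace α] {ν : Measure α}
    [IsProbabilityMeasure ν] {g : α → ℝ≥0∞} (hg : AEMeasurable g ν) {p : ℝ} (hp : 1 ≤ p) :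
    (∫⁻ a, g a ∂ν) ^ p ≤ ∫⁻ a, g a ^ p ∂ν := by
  have h := eLpNorm'_le_eLpNorm'_of_exponent_le one_pos hp ν hg.aestronglyMeasurable
  simp only [eLpNorm'_eq_lintegral_enorm, enorm_eq_self, ENNReal.rpow_one, div_one] at h
  have hp0 : 0 < p := one_pos.trans_le hp
  calc (∫⁻ a, g a ∂ν) ^ p ≤ ((∫⁻ a, g a ^ p ∂ν) ^ (1 / p)) ^ p := by gcongr
    _ = ∫⁻ a, g a ^ p ∂ν := by
      rw [← ENNReal.rpow_mul, one_div_mul_cancel hp0.ne', ENNReal.rpow_one]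

section quadB

variable {E : Type*} [NormedAddCommGroup E] [NormedSpace ℝ E] {Δt : ℝ} {F : ℝ → E}

lemma norm_quadB_le (hΔt : 0 < Δt) {M : ℝ}
    (hM : ∀ᵐ t ∂(volume.restrict (Ioi 0)), ‖F t‖ ≤ M) (k : ℕ) : ‖quadB Δt F k‖ ≤ M := by
  have hM' : ∀ᵐ u ∂erlangMeasure (k - 1), ‖F (Δt * u)‖ ≤ M :=
    (erlangMeasure_absolutelyContinuous _).ae_le
      ((quasiMeasurePreserving_const_mul_restrict_Ioi hΔt).ae hM)
  simpa [quadB_eq_integral_erlangMeasure] using norm_integral_le_of_norm_le_const hM'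

lemma enorm_quadB_rpow_le (hΔt : 0 < Δt) (hF : AEStronglyMeasurable F (volume.restrict (Ioi 0)))
    {p : ℝ} (hp : 1 ≤ p) (k : ℕ) :
    ‖quadB Δt F k‖ₑ ^ p ≤
      ∫⁻ u in Ioi 0, ENNReal.ofReal (erlangDensity (k - 1) u) * ‖F (Δt * u)‖ₑ ^ p := by
  have hFc : AEMeasurable (fun u => ‖F (Δt * u)‖ₑ) (erlangMeasure (k - 1)) :=
    ((hF.comp_quasiMeasurePreserving (quasiMeasurePreserving_const_mul_restrict_Ioi hΔt)).enorm
      ).mono_ac (erlangMeasure_absolutelyContinuous _)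
  rw [quadB_eq_integral_erlangMeasure, ← lintegral_erlangMeasure]
  calc ‖∫ u, F (Δt * u) ∂erlangMeasure (k - 1)‖ₑ ^ p
      ≤ (∫⁻ u, ‖F (Δt * u)‖ₑ ∂erlangMeasure (k - 1)) ^ p := by
        gcongr; exact enorm_integral_le_lintegral_enorm _
    _ ≤ ∫⁻ u, ‖F (Δt * u)‖ₑ ^ p ∂erlangMeasure (k - 1) :=
        rpow_lintegral_le_lintegral_rpow hFc hp

lemma sum_enorm_quadB_rpow_le (hΔt : 0 < Δt)
    (hF : AEStronglyMeasurable F (volume.restrict (Ioi 0))) {p : ℝ} (hp : 1 ≤ p) (n : ℕ) :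
    ∑ k ∈ Finset.Icc 1 n, ‖quadB Δt F k‖ₑ ^ p ≤
      ∫⁻ u in Ioi 0, ‖F (Δt * u)‖ₑ ^ p := by
  set g : ℝ → ℝ≥0∞ := fun u => ‖F (Δt * u)‖ₑ ^ p
  have hg : AEMeasurable g (volume.restrict (Ioi 0)) :=
    (hF.comp_quasiMeasurePreserving
      (quasiMeasurePreserving_const_mul_restrict_Ioi hΔt)).enorm.pow_const p
  calc ∑ k ∈ Finset.Icc 1 n, ‖quadB Δt F k‖ₑ ^ p
      ≤ ∑ k ∈ Finset.Icc 1 n, ∫⁻ u in Ioi 0, ENNReal.ofReal (erlangDensity (k - 1) u) * g u :=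
        Finset.sum_le_sum fun k _ => enorm_quadB_rpow_le hΔt hF hp k
    _ = ∫⁻ u in Ioi 0,
          ENNReal.ofReal (∑ k ∈ Finset.Icc 1 n, erlangDensity (k - 1) u) * g u := by
        rw [← lintegral_finsetSum' (f := fun k u => ENNReal.ofReal (erlangDensity (k - 1) u) * g u)
          _ fun k _ => (measurable_erlangDensity _).ennreal_ofReal.aemeasurable.mul hg]
        refine setLIntegral_congr_fun measurableSet_Ioi fun u hu => ?_
        rw [ENNReal.ofReal_sum_of_nonneg fun k _ => erlangDensity_nonneg _ hu.le, Finset.sum_mul]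
    _ ≤ ∫⁻ u in Ioi 0, 1 * g u := by
        refine setLIntegral_mono' measurableSet_Ioi fun u hu => ?_
        gcongr
        exact ENNReal.ofReal_le_one.2 (sum_erlangDensity_le_one n hu.le)
    _ = ∫⁻ u in Ioi 0, g u := by simp_rw [one_mul]

end quadB

theorem statement14_general {H : Type*} [NormedAddCommGroup H] [InnerProductSpace ℝ H]
    (Δt : ℝ) (hΔt : 0 < Δt) (F : ℝ → H)
    (hF : AEStronglyMeasurable F (volume.restrict (Set.Ioi (0 : ℝ)))) :
    (∀ p : ℝ, 1 ≤ p →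
      (∫⁻ t in Set.Ioi (0 : ℝ), ENNReal.ofReal (‖F t‖ ^ p)) < ⊤ →
      ∀ n : ℕ, 1 ≤ n →
        ENNReal.ofReal (Δt * ∑ k ∈ Finset.Icc 1 n, ‖quadB Δt F k‖ ^ p) ≤
          ∫⁻ t in Set.Ioi (0 : ℝ), ENNReal.ofReal (‖F t‖ ^ p)) ∧
    (∀ M : ℝ, (∀ᵐ t ∂(volume.restrict (Set.Ioi (0 : ℝ))), ‖F t‖ ≤ M) →
      ∀ k : ℕ, 1 ≤ k → ‖quadB Δt F k‖ ≤ M) := by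
  refine ⟨fun p hp _ n _ => ?_, fun M hM k _ => norm_quadB_le hΔt hM k⟩
  have hofReal : ∀ x : H, ENNReal.ofReal (‖x‖ ^ p) = ‖x‖ₑ ^ p := fun x => by
    rw [← ENNReal.ofReal_rpow_of_nonneg (norm_nonneg x) (zero_le_one.trans hp), ofReal_norm]
  rw [ENNReal.ofReal_mul hΔt.le, ENNReal.ofReal_sum_of_nonneg fun k _ => by positivity]
  simp_rw [hofReal]
  rw [← lintegral_comp_const_mul_Ioi (fun t => ‖F t‖ₑ ^ p) hΔt]
  gcongr
  exact sum_enorm_quadB_rpow_le hΔt hF hp n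

/-- `ℓ^p`-stability of the Backward Euler convolution quadrature:
(i) `Δt Σ_{k=1}^n ‖B_k‖^p ≤ ∫₀^∞ ‖F(t)‖^p dt` and (ii) `sup_{k≥1} ‖B_k‖` is bounded
by any essential bound of `‖F‖`. -/
theorem statement14 {H : Type*} [NormedAddCommGroup H] [InnerProductSpace ℝ H]
    [CompleteSpace H]
    (Δt : ℝ) (hΔt : 0 < Δt) (F : ℝ → H)
    (hF : AEStronglyMeasurable F (volume.restrict (Set.Ioi (0 : ℝ)))) :
    (∀ p : ℝ, 1 ≤ p →
      (∫⁻ t in Set.Ioi (0 : ℝ), ENNReal.ofReal (‖F t‖ ^ p)) < ⊤ →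
      ∀ n : ℕ, 1 ≤ n →
        ENNReal.ofReal (Δt * ∑ k ∈ Finset.Icc 1 n, ‖quadB Δt F k‖ ^ p) ≤
          ∫⁻ t in Set.Ioi (0 : ℝ), ENNReal.ofReal (‖F t‖ ^ p)) ∧
    (∀ M : ℝ, (∀ᵐ t ∂(volume.restrict (Set.Ioi (0 : ℝ))), ‖F t‖ ≤ M) →
      ∀ k : ℕ, 1 ≤ k → ‖quadB Δt F k‖ ≤ M) :=
  statement14_general Δt hΔt F hF
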